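/- Let {{−,−}} be a double Poisson bracket on A. Then {−,−} := μ∘{{−,−}} descends to a well-defined k-bilinear map A_♮ × A → A (the element {a,b} ∈ A depends only on the class ā of the first argument), and the resulting map A_♮ → End_k(A), ā ↦ {ā,−}, is a homomorphism of Lie algebras from A_♮ (equipped with the Lie bracket induced by {−,−}) to End_k(A) with the commutator bracket; thus A becomes a representation of the Lie algebra A_♮. -/
import Mathlib


/-!
Statement 4: if `{{-,-}}` is a double Poisson bracket on a unital associative `k`-algebra `A`
(char `k = 0`), then `{-,-} := μ ∘ {{-,-}}` descends to a well-defined `k`-bilinear map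
`A_♮ × A → A`, and the resulting map `A_♮ → End_k(A)`, `ā ↦ {ā,-}`, is a Lie algebra
homomorphism from `A_♮` (with the induced bracket) to `End_k(A)` with the commutator bracket;
thus `A` is a representation of the Lie algebra `A_♮`.
-/

noncomputable section

open TensorProduct

set_option linter.unusedSectionVars false

variable (k : Type*) [Field k] [CharZero k]
variable (A : Type*) [Ring A] [Algebra k A]

/-- `{{a, x′⊗x″}}_L := {{a,x′}} ⊗ x″`, as a linear map `A ⊗ A → (A ⊗ A) ⊗ A`. -/
def leftExt (D : A ⊗[k] A →ₗ[k] A ⊗[k] A) (a : A) :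
    A ⊗[k] A →ₗ[k] (A ⊗[k] A) ⊗[k] A :=
  LinearMap.rTensor A (D ∘ₗ TensorProduct.mk k A A a)

/-- The cyclic permutation `σ(x′⊗x″⊗x‴) = x‴⊗x′⊗x″` on `(A ⊗ A) ⊗ A`. -/
def cyc : (A ⊗[k] A) ⊗[k] A →ₗ[k] (A ⊗[k] A) ⊗[k] A :=
  (TensorProduct.assoc k A A A).symm.toLinearMap ∘ₗ
    (TensorProduct.comm k (A ⊗[k] A) A).toLinearMap

/-- A double Poisson bracket on `A`. -/
def IsDoublePoisson (D : A ⊗[k] A →ₗ[k] A ⊗[k] A) : Prop :=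
  (∀ a b : A, D (a ⊗ₜ[k] b) = - (TensorProduct.comm k A A) (D (b ⊗ₜ[k] a))) ∧
  (∀ a b c : A,
      D (a ⊗ₜ[k] (b * c)) =
        LinearMap.lTensor A (LinearMap.mulRight k c) (D (a ⊗ₜ[k] b)) +
        LinearMap.rTensor A (LinearMap.mulLeft k b) (D (a ⊗ₜ[k] c))) ∧
  (∀ a b c : A,
      leftExt k A D a (D (b ⊗ₜ[k] c)) +
      cyc k A (leftExt k A D b (D (c ⊗ₜ[k] a))) +
      cyc k A (cyc k A (leftExt k A D c (D (a ⊗ₜ[k] b)))) = 0)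

/-- The associated bracket `{a,b} = μ({{a,b}})`. -/
def assocBracket (D : A ⊗[k] A →ₗ[k] A ⊗[k] A) (a b : A) : A :=
  LinearMap.mul' k A (D (a ⊗ₜ[k] b))

/-- The commutator subspace `[A,A] ⊆ A`. -/
def commutatorSubmodule : Submodule k A :=
  Submodule.span k {x : A | ∃ a b : A, x = a * b - b * a}

/-! ### Auxiliary machinery -/

/-- The "multiply everything" map `(x⊗y)⊗z ↦ xyz`. -/
def Mmul : (A ⊗[k] A) ⊗[k] A →ₗ[k] A :=
  LinearMap.mul' k A ∘ₗ LinearMap.rTensor A (LinearMap.mul' k A)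

lemma Mmul_tmul (x y z : A) : Mmul k A ((x ⊗ₜ[k] y) ⊗ₜ[k] z) = x * y * z := by
  simp [Mmul]

lemma cyc_tmul (x y z : A) :
    cyc k A ((x ⊗ₜ[k] y) ⊗ₜ[k] z) = (z ⊗ₜ[k] x) ⊗ₜ[k] y := by
  simp [cyc]

lemma mul'_lTensor (c : A) (t : A ⊗[k] A) :
    LinearMap.mul' k A (LinearMap.lTensor A (LinearMap.mulRight k c) t) =
      LinearMap.mul' k A t * c := by
  induction t using TensorProduct.induction_on with
  | zero => simp
  | tmul x y => simp [mul_assoc]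
  | add x y hx hy => simp [hx, hy, add_mul]

lemma mul'_rTensor (b : A) (t : A ⊗[k] A) :
    LinearMap.mul' k A (LinearMap.rTensor A (LinearMap.mulLeft k b) t) =
      b * LinearMap.mul' k A t := by
  induction t using TensorProduct.induction_on with
  | zero => simp
  | tmul x y => simp [mul_assoc]
  | add x y hx hy => simp [hx, hy, mul_add]

lemma comm_comm_apply (t : A ⊗[k] A) :
    (TensorProduct.comm k A A) ((TensorProduct.comm k A A) t) = t := by
  induction t using TensorProduct.induction_on with
  | zero => simp
  | tmul x y => simp
  | add x y hx hy => simp [hx, hy]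

lemma mul'_comm_rTensor (b : A) (t : A ⊗[k] A) :
    LinearMap.mul' k A ((TensorProduct.comm k A A)
        (LinearMap.rTensor A (LinearMap.mulLeft k b) t)) =
      LinearMap.mul' k A ((TensorProduct.comm k A A)
        (LinearMap.lTensor A (LinearMap.mulRight k b) t)) := by
  induction t using TensorProduct.induction_on with
  | zero => simp
  | tmul x y => simp [mul_assoc]
  | add x y hx hy =>
      simp only [map_add, hx, hy]

lemma Mmul_smul_tmul (s : A ⊗[k] A) (v : A) :
    Mmul k A (s ⊗ₜ[k] v) = LinearMap.mul' k A s * v := by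
  induction s using TensorProduct.induction_on with
  | zero => simp
  | tmul x y => simp [Mmul_tmul]
  | add x y hx hy => simp [TensorProduct.add_tmul, hx, hy, add_mul]

lemma Mmul_cyc_tmul (s : A ⊗[k] A) (v : A) :
    Mmul k A (cyc k A (s ⊗ₜ[k] v)) = v * LinearMap.mul' k A s := by
  induction s using TensorProduct.induction_on with
  | zero => simp
  | tmul x y => simp [cyc_tmul, Mmul_tmul, mul_assoc]
  | add x y hx hy => simp [TensorProduct.add_tmul, hx, hy, mul_add]

lemma Mmul_cyc_cyc_tmul (s : A ⊗[k] A) (q : A) :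
    Mmul k A (cyc k A (cyc k A (s ⊗ₜ[k] q))) =
      LinearMap.mul' k A ((TensorProduct.comm k A A)
        (LinearMap.lTensor A (LinearMap.mulRight k q) s)) := by
  induction s using TensorProduct.induction_on with
  | zero => simp
  | tmul x y => simp [cyc_tmul, Mmul_tmul]
  | add x y hx hy => simp [TensorProduct.add_tmul, hx, hy]

lemma leftExt_tmul (D : A ⊗[k] A →ₗ[k] A ⊗[k] A) (a u v : A) :
    leftExt k A D a (u ⊗ₜ[k] v) = (D (a ⊗ₜ[k] u)) ⊗ₜ[k] v := by
  simp [leftExt]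

/-- The auxiliary map `g a : u⊗v ↦ u * {a,v}`. -/
def gmap (D : A ⊗[k] A →ₗ[k] A ⊗[k] A) (a : A) : A ⊗[k] A →ₗ[k] A :=
  LinearMap.mul' k A ∘ₗ
    LinearMap.lTensor A (LinearMap.mul' k A ∘ₗ D ∘ₗ TensorProduct.mk k A A a)

lemma gmap_tmul (D : A ⊗[k] A →ₗ[k] A ⊗[k] A) (a u v : A) :
    gmap k A D a (u ⊗ₜ[k] v) = u * LinearMap.mul' k A (D (a ⊗ₜ[k] v)) := by
  simp [gmap]

/-- Derivation property in tensor form: `{a, μ t} = M(leftExt a t) + g a t`. -/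
lemma der_tensor (D : A ⊗[k] A →ₗ[k] A ⊗[k] A) (hD : IsDoublePoisson k A D)
    (a : A) (t : A ⊗[k] A) :
    LinearMap.mul' k A (D (a ⊗ₜ[k] LinearMap.mul' k A t)) =
      Mmul k A (leftExt k A D a t) + gmap k A D a t := by
  induction t using TensorProduct.induction_on with
  | zero => simp
  | tmul u v =>
      rw [leftExt_tmul, gmap_tmul, Mmul_smul_tmul]
      simp only [LinearMap.mul'_apply]
      rw [hD.2.1 a u v, map_add, mul'_lTensor, mul'_rTensor]
  | add x y hx hy =>
      simp only [map_add, TensorProduct.tmul_add, hx, hy]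
      abel

/-- `M(cyc(leftExt a t)) = g a (comm t)`. -/
lemma cyc_leftExt_tensor (D : A ⊗[k] A →ₗ[k] A ⊗[k] A) (a : A) (t : A ⊗[k] A) :
    Mmul k A (cyc k A (leftExt k A D a t)) =
      gmap k A D a ((TensorProduct.comm k A A) t) := by
  induction t using TensorProduct.induction_on with
  | zero => simp
  | tmul u v => rw [leftExt_tmul, Mmul_cyc_tmul, TensorProduct.comm_tmul, gmap_tmul]
  | add x y hx hy => simp only [map_add, hx, hy]

/-- `{μ t, c} = - M(cyc²(leftExt c t)) - M(cyc²(leftExt c (comm t)))`. -/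
lemma first_slot_tensor (D : A ⊗[k] A →ₗ[k] A ⊗[k] A) (hD : IsDoublePoisson k A D)
    (c : A) (t : A ⊗[k] A) :
    LinearMap.mul' k A (D (LinearMap.mul' k A t ⊗ₜ[k] c)) =
      - Mmul k A (cyc k A (cyc k A (leftExt k A D c t)))
      - Mmul k A (cyc k A (cyc k A (leftExt k A D c
          ((TensorProduct.comm k A A) t)))) := by
  induction t using TensorProduct.induction_on with
  | zero => simp
  | tmul u v =>
      rw [TensorProduct.comm_tmul, leftExt_tmul, leftExt_tmul,
        Mmul_cyc_cyc_tmul, Mmul_cyc_cyc_tmul]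
      simp only [LinearMap.mul'_apply]
      rw [hD.1 (u * v) c, hD.2.1 c u v]
      simp only [map_add, map_neg]
      rw [mul'_comm_rTensor]
      abel
  | add x y hx hy =>
      simp only [map_add, TensorProduct.add_tmul, hx, hy]
      abel

/-- `{·, c}` does not distinguish `uv` from `vu` in the first slot. -/
lemma comm_first_slot (D : A ⊗[k] A →ₗ[k] A ⊗[k] A) (hD : IsDoublePoisson k A D)
    (u v c : A) :
    assocBracket k A D (u * v) c = assocBracket k A D (v * u) c := by
  unfold assocBracket
  rw [hD.1 (u * v) c, hD.1 (v * u) c, hD.2.1 c u v, hD.2.1 c v u]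
  simp only [map_add, map_neg]
  rw [mul'_comm_rTensor, mul'_comm_rTensor]
  abel

/-- The Loday identity for the associated bracket. -/
lemma loday (D : A ⊗[k] A →ₗ[k] A ⊗[k] A) (hD : IsDoublePoisson k A D) (a b c : A) :
    assocBracket k A D (assocBracket k A D a b) c =
      assocBracket k A D a (assocBracket k A D b c) -
      assocBracket k A D b (assocBracket k A D a c) := by
  have E1 := congrArg (Mmul k A) (hD.2.2 a b c)
  rw [hD.1 c a] at E1
  simp only [map_add, map_zero, map_neg] at E1
  rw [cyc_leftExt_tensor, comm_comm_apply] at E1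
  have E2 := congrArg (Mmul k A) (hD.2.2 b a c)
  rw [hD.1 c b, hD.1 b a] at E2
  simp only [map_add, map_zero, map_neg] at E2
  rw [cyc_leftExt_tensor, comm_comm_apply] at E2
  unfold assocBracket
  rw [first_slot_tensor k A D hD c (D (a ⊗ₜ[k] b)),
    der_tensor k A D hD a (D (b ⊗ₜ[k] c)),
    der_tensor k A D hD b (D (a ⊗ₜ[k] c))]
  have hP := eq_neg_of_add_eq_zero_right E1
  have hQ := eq_neg_of_add_eq_zero_right E2
  rw [hP]
  rw [sub_eq_add_neg, hQ]
  abel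

/-- The bilinear bracket `a ↦ b ↦ {a,b}` as an iterated linear map. -/
def brMap (D : A ⊗[k] A →ₗ[k] A ⊗[k] A) : A →ₗ[k] A →ₗ[k] A :=
  (TensorProduct.mk k A A).compr₂ (LinearMap.mul' k A ∘ₗ D)

lemma brMap_apply (D : A ⊗[k] A →ₗ[k] A ⊗[k] A) (a b : A) :
    brMap k A D a b = assocBracket k A D a b := rfl

theorem doublePoisson_action_of_Anat
    (D : A ⊗[k] A →ₗ[k] A ⊗[k] A) (hD : IsDoublePoisson k A D) :
    ∃ ρ : (A ⧸ commutatorSubmodule k A) →ₗ[k] (A →ₗ[k] A),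
      (∀ a b : A, ρ ((commutatorSubmodule k A).mkQ a) b = assocBracket k A D a b) ∧
      (∀ a b : A,
          ρ ((commutatorSubmodule k A).mkQ (assocBracket k A D a b)) =
            ρ ((commutatorSubmodule k A).mkQ a) ∘ₗ ρ ((commutatorSubmodule k A).mkQ b) -
            ρ ((commutatorSubmodule k A).mkQ b) ∘ₗ ρ ((commutatorSubmodule k A).mkQ a)) := by
  have hle : commutatorSubmodule k A ≤ LinearMap.ker (brMap k A D) := by
    rw [commutatorSubmodule, Submodule.span_le]
    rintro x ⟨u, v, rfl⟩
    simp only [SetLike.mem_coe, LinearMap.mem_ker, map_sub]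
    rw [sub_eq_zero]
    ext c
    exact comm_first_slot k A D hD u v c
  have key : ∀ x : A,
      (commutatorSubmodule k A).liftQ (brMap k A D) hle
        ((commutatorSubmodule k A).mkQ x) = brMap k A D x := fun x => rfl
  refine ⟨(commutatorSubmodule k A).liftQ (brMap k A D) hle, ?_, ?_⟩
  · intro a b
    rw [key]
    rfl
  · intro a b
    rw [key, key, key]
    ext c
    simp only [LinearMap.sub_apply, LinearMap.comp_apply, brMap_apply]
    exact loday k A D hD a b c

end
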